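/- The graded quasi-primary spectrum q.Spec_g(R) of a G-graded commutative ring R with the quasi-Zariski topology is quasi-compact. -/

import Mathlib

/-- The graded radical `Gr(I)` of an ideal `I` of a `G`-graded commutative ring:
the set of all `r` such that every homogeneous component of `r` has some positive
power in `I`. -/
def gradedRadical {G R : Type*} [AddGroup G] [DecidableEq G] [CommRing R]
    (𝒜 : G → AddSubgroup R) [GradedRing 𝒜] (I : Ideal R) : Set R :=
  {r : R | ∀ g : G, ∃ n : ℕ, 0 < n ∧ (DirectSum.decompose 𝒜 r g : R) ^ n ∈ I}

/-- An ideal is graded if it contains the homogeneous components of all its elements. -/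
def IsGradedIdeal {G R : Type*} [AddGroup G] [DecidableEq G] [CommRing R]
    (𝒜 : G → AddSubgroup R) [GradedRing 𝒜] (I : Ideal R) : Prop :=
  ∀ (g : G) ⦃r : R⦄, r ∈ I → (DirectSum.decompose 𝒜 r g : R) ∈ I

/-- A graded prime ideal: a proper graded ideal such that `r * s ∈ P` for homogeneous
`r, s` implies `r ∈ P` or `s ∈ P`. -/
def IsGradedPrimeIdeal {G R : Type*} [AddGroup G] [DecidableEq G] [CommRing R]
    (𝒜 : G → AddSubgroup R) [GradedRing 𝒜] (P : Ideal R) : Prop :=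
  P ≠ ⊤ ∧ IsGradedIdeal 𝒜 P ∧
    ∀ ⦃r s : R⦄, SetLike.IsHomogeneousElem 𝒜 r → SetLike.IsHomogeneousElem 𝒜 s →
      r * s ∈ P → r ∈ P ∨ s ∈ P

/-- A graded quasi-primary ideal: a proper graded ideal such that `a * b ∈ q` for
homogeneous `a, b` implies `a ∈ Gr(q)` or `b ∈ Gr(q)`. -/
def IsGradedQuasiPrimaryIdeal {G R : Type*} [AddGroup G] [DecidableEq G] [CommRing R]
    (𝒜 : G → AddSubgroup R) [GradedRing 𝒜] (q : Ideal R) : Prop :=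
  q ≠ ⊤ ∧ IsGradedIdeal 𝒜 q ∧
    ∀ ⦃a b : R⦄, SetLike.IsHomogeneousElem 𝒜 a → SetLike.IsHomogeneousElem 𝒜 b →
      a * b ∈ q → a ∈ gradedRadical 𝒜 q ∨ b ∈ gradedRadical 𝒜 q

/-- The graded quasi-primary spectrum of `R`: the set of all graded quasi-primary ideals. -/
def qpSpecR {G R : Type*} [AddGroup G] [DecidableEq G] [CommRing R]
    (𝒜 : G → AddSubgroup R) [GradedRing 𝒜] : Set (Ideal R) :=
  {q : Ideal R | IsGradedQuasiPrimaryIdeal 𝒜 q}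

/-- The variety `qp-V_R^g(I) = { q ∈ q.Spec_g(R) : Gr(q) ⊇ I }`. -/
def qpVR {G R : Type*} [AddGroup G] [DecidableEq G] [CommRing R]
    (𝒜 : G → AddSubgroup R) [GradedRing 𝒜] (I : Ideal R) : Set (qpSpecR 𝒜) :=
  {q : qpSpecR 𝒜 | (I : Set R) ⊆ gradedRadical 𝒜 q.1}

/-- The quasi-Zariski topology on `q.Spec_g(R)`, generated by the complements of the
varieties of graded ideals. -/
def qpZariskiR {G R : Type*} [AddGroup G] [DecidableEq G] [CommRing R]
    (𝒜 : G → AddSubgroup R) [GradedRing 𝒜] : TopologicalSpace (qpSpecR 𝒜) :=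
  TopologicalSpace.generateFrom
    {U : Set (qpSpecR 𝒜) | ∃ I : Ideal R, IsGradedIdeal 𝒜 I ∧ U = (qpVR 𝒜 I)ᶜ}

/-! For a graded ideal `I`, `I ⊆ Gr(q)` just says `I ≤ √q`, so the quasi-Zariski closed sets behave
like Zariski closed sets: `⋂ᵢ qp-V(Iᵢ) = qp-V(⨆ᵢ Iᵢ)`, and `qp-V(I)` is empty only for `I = R`,
because a proper graded ideal lies in the homogeneous core of a maximal ideal, which is graded prime
and hence graded quasi-primary. If subbasic open sets cover the space, the corresponding ideals thus
generate `R`, so finitely many of them already do; by Alexander's subbasis theorem this suffices.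

`IsGradedIdeal 𝒜` is definitionally Mathlib's `Ideal.IsHomogeneous 𝒜`, whose API is used directly. -/

section

open DirectSum CompleteLattice

variable {G R : Type*} [AddGroup G] [DecidableEq G] [CommRing R]
  (𝒜 : G → AddSubgroup R) [GradedRing 𝒜]

theorem mem_gradedRadical_iff {q : Ideal R} {r : R} :
    r ∈ gradedRadical 𝒜 q ↔ ∀ g, (decompose 𝒜 r g : R) ∈ q.radical := by
  refine ⟨fun h g => ?_, fun h g => ?_⟩
  · obtain ⟨n, -, hn⟩ := h g
    exact ⟨n, hn⟩
  · obtain ⟨n, hn⟩ := h g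
    exact ⟨n + 1, n.succ_pos, by rw [pow_succ]; exact q.mul_mem_right _ hn⟩

variable {𝒜}

theorem coe_subset_gradedRadical_iff {I q : Ideal R} (hI : IsGradedIdeal 𝒜 I) :
    (I : Set R) ⊆ gradedRadical 𝒜 q ↔ I ≤ q.radical := by
  classical
  refine ⟨fun h r hr => ?_, fun h r hr => (mem_gradedRadical_iff 𝒜).2 fun g => h (hI g hr)⟩
  rw [← sum_support_decompose 𝒜 r]
  exact Ideal.sum_mem _ fun g _ => (mem_gradedRadical_iff 𝒜).1 (h hr) g

theorem mem_qpVR_iff {I : Ideal R} (hI : IsGradedIdeal 𝒜 I) {q : qpSpecR 𝒜} :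
    q ∈ qpVR 𝒜 I ↔ I ≤ q.1.radical :=
  coe_subset_gradedRadical_iff hI

theorem iInter_qpVR {ι : Sort*} {I : ι → Ideal R} (hI : ∀ i, IsGradedIdeal 𝒜 (I i)) :
    ⋂ i, qpVR 𝒜 (I i) = qpVR 𝒜 (⨆ i, I i) := by
  ext q
  simp only [Set.mem_iInter, mem_qpVR_iff (hI _), iSup_le_iff,
    mem_qpVR_iff (Ideal.IsHomogeneous.iSup hI)]

theorem IsGradedPrimeIdeal.isGradedQuasiPrimaryIdeal {P : Ideal R}
    (hP : IsGradedPrimeIdeal 𝒜 P) : IsGradedQuasiPrimaryIdeal 𝒜 P := by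
  obtain ⟨hP_top, hP_graded, hP_prime⟩ := hP
  have hP_sub : (P : Set R) ⊆ gradedRadical 𝒜 P :=
    (coe_subset_gradedRadical_iff hP_graded).2 Ideal.le_radical
  exact ⟨hP_top, hP_graded, fun a b ha hb hab => (hP_prime ha hb hab).imp (@hP_sub a) (@hP_sub b)⟩

variable (𝒜)

theorem Ideal.IsPrime.isGradedPrimeIdeal_homogeneousCore {P : Ideal R} (hP : P.IsPrime) :
    IsGradedPrimeIdeal 𝒜 (P.homogeneousCore 𝒜).toIdeal := by
  have hle := Ideal.toIdeal_homogeneousCore_le 𝒜 P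
  refine ⟨ne_top_of_le_ne_top hP.ne_top hle, (P.homogeneousCore 𝒜).isHomogeneous,
    fun r s hr hs hrs => ?_⟩
  exact (hP.mem_or_mem (hle hrs)).imp (Ideal.mem_homogeneousCore_of_homogeneous_of_mem hr)
    (Ideal.mem_homogeneousCore_of_homogeneous_of_mem hs)

variable {𝒜}

theorem exists_isGradedPrimeIdeal_le {I : Ideal R} (hI : IsGradedIdeal 𝒜 I) (hI_top : I ≠ ⊤) :
    ∃ P, IsGradedPrimeIdeal 𝒜 P ∧ I ≤ P := by
  obtain ⟨M, hM, hIM⟩ := I.exists_le_maximal hI_top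
  refine ⟨_, hM.isPrime.isGradedPrimeIdeal_homogeneousCore 𝒜, ?_⟩
  rw [← Ideal.IsHomogeneous.toIdeal_homogeneousCore_eq_self hI]
  exact Ideal.homogeneousCore_mono 𝒜 hIM

theorem qpVR_eq_empty_iff {I : Ideal R} (hI : IsGradedIdeal 𝒜 I) : qpVR 𝒜 I = ∅ ↔ I = ⊤ := by
  refine ⟨fun h => by_contra fun hI_top => ?_, ?_⟩
  · obtain ⟨P, hP, hIP⟩ := exists_isGradedPrimeIdeal_le hI hI_top
    have hP_mem : ⟨P, hP.isGradedQuasiPrimaryIdeal⟩ ∈ qpVR 𝒜 I :=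
      (mem_qpVR_iff hI).2 (hIP.trans Ideal.le_radical)
    simp [h] at hP_mem
  · rintro rfl
    refine Set.eq_empty_of_forall_notMem fun q hq => q.2.1 ?_
    exact Ideal.radical_eq_top.1 (top_le_iff.1 ((mem_qpVR_iff hI).1 hq))

theorem exists_finset_iInter_qpVR_eq_empty {ι : Type*} {I : ι → Ideal R}
    (hI : ∀ i, IsGradedIdeal 𝒜 (I i)) (h : ⋂ i, qpVR 𝒜 (I i) = ∅) :
    ∃ s : Finset ι, ⋂ i ∈ s, qpVR 𝒜 (I i) = ∅ := by
  have hI_sup : ⨆ i, I i = ⊤ :=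
    (qpVR_eq_empty_iff (Ideal.IsHomogeneous.iSup hI)).1 (by rw [← iInter_qpVR hI, h])
  obtain ⟨s, hs⟩ :=
    IsCompactElement.exists_finset_of_le_iSup _ Ideal.isCompactElement_top I hI_sup.ge
  have hI_s : ∀ i, IsGradedIdeal 𝒜 (⨆ _ : i ∈ s, I i) := fun i =>
    Ideal.IsHomogeneous.iSup fun _ => hI i
  refine ⟨s, ?_⟩
  simp_rw [iInter_qpVR (fun _ => hI _), iInter_qpVR hI_s]
  exact (qpVR_eq_empty_iff (Ideal.IsHomogeneous.iSup hI_s)).2 (top_le_iff.1 hs)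

end

/-- The graded quasi-primary spectrum of `R` with the quasi-Zariski topology is
quasi-compact. -/
theorem qpSpecR_compactSpace {G R : Type*} [AddGroup G] [DecidableEq G]
    [CommRing R] (𝒜 : G → AddSubgroup R) [GradedRing 𝒜] :
    @CompactSpace (qpSpecR 𝒜) (qpZariskiR 𝒜) := by
  let := qpZariskiR 𝒜
  refine compactSpace_generateFrom' rfl fun ι U hU => ?_
  choose I hI hUI using fun i => (U i).2
  obtain ⟨s, hs⟩ := exists_finset_iInter_qpVR_eq_empty hI
    (by simpa [hUI, ← Set.compl_iInter, Set.compl_empty_iff] using hU)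
  exact ⟨s, s.finite_toSet, by simpa [hUI, ← Set.compl_iInter] using hs⟩
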